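/- arXiv:2306.05979 — 6 statements merged into one kernel-verified Lean document; each statement's English description precedes it below -/
import Mathlib

section
/- Let G be a connected graph, let (T, (B_t)_{t∈V(T)}) be a tree decomposition of G, and let A ⊆ V(G). Then there exists a node t ∈ V(T) such that every connected component of G[A \ B_t] has at most |A|/2 vertices. -/
/-- A tree decomposition of a graph `G`: a tree `T` on node type `ι` together with bags
`bag t ⊆ V` such that every vertex appears in a nonempty connected (in `T`) set of bags,
and every edge of `G` is contained in some bag. -/
structure TreeDecomp {V : Type*} (G : SimpleGraph V) (ι : Type*) where
  T : SimpleGraph ι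
  isTree : T.IsTree
  bag : ι → Set V
  bag_nonempty : ∀ v : V, ∃ t, v ∈ bag t
  bag_connected : ∀ v : V, (T.induce {t | v ∈ bag t}).Connected
  bag_edge : ∀ u v : V, G.Adj u v → ∃ t, u ∈ bag t ∧ v ∈ bag t

/-!
If no bag works, every node `t` has a component `C t` of `G[A \ B_t]` with more than `|A|/2`
vertices. As `C t` is connected and misses `B_t`, the bags meeting it form a connected subtree
of `T - t`, so they all lie in the branch at one neighbour `f t` of `t`. A finite tree has fewer
edges than nodes, so `t ↦ {t, f t}` is not injective and `f (f t) = t` for some `t`. The two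
components `C t` and `C (f t)` are larger than `|A|/2`, hence share a vertex; a bag containing
it lies on both sides of the edge `{t, f t}`, which is impossible because that edge is a bridge.
-/

open SimpleGraph

lemma Set.inter_nonempty_of_ncard_lt_ncard_add_ncard {α : Type*} {s t u : Set α}
    (hs : s.Finite) (ht : t ⊆ s) (hu : u ⊆ s) (h : s.ncard < t.ncard + u.ncard) :
    (t ∩ u).Nonempty := by
  by_contra! hdisj
  have hunion := Set.ncard_union_eq (Set.disjoint_iff_inter_eq_empty.mpr hdisj)
    (hs.subset ht) (hs.subset hu)
  have hle := Set.ncard_le_ncard (Set.union_subset ht hu) hs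
  omega

namespace SimpleGraph

variable {ι : Type*} {T : SimpleGraph ι}

lemma exists_walk_of_connected_induce {s : Set ι} (h : (T.induce s).Connected) {a b : ι}
    (ha : a ∈ s) (hb : b ∈ s) : ∃ p : T.Walk a b, ∀ x ∈ p.support, x ∈ s := by
  obtain ⟨p⟩ := h ⟨a, ha⟩ ⟨b, hb⟩
  refine ⟨p.map (Embedding.induce s).toHom, fun x hx => ?_⟩
  obtain ⟨y, -, rfl⟩ := List.mem_map.mp (p.support_map (Embedding.induce s).toHom ▸ hx)
  exact y.2

lemma IsAcyclic.mem_support_of_adj (hT : T.IsAcyclic) {t t' a : ι} (h : T.Adj t t')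
    (q : T.Walk t a) (q' : T.Walk t' a) (hq : t' ∉ q.support) : t ∈ q'.support := by
  have hmem := isBridge_iff_forall_walk_mem_edges.mp (isAcyclic_iff_forall_adj_isBridge.mp hT h)
    (q.append q'.reverse)
  rw [Walk.edges_append, List.mem_append] at hmem
  rcases hmem with he | he
  · exact absurd (q.snd_mem_support_of_mem_edges he) hq
  · simpa using q'.reverse.fst_mem_support_of_mem_edges he

lemma IsTree.exists_apply_apply_eq [Fintype ι] (hT : T.IsTree) (f : ι → ι)
    (hf : ∀ t, T.Adj t (f t)) : ∃ t, f (f t) = t := by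
  classical
  have hcard : Fintype.card T.edgeSet < Fintype.card ι := by
    rw [← edgeFinset_card, ← hT.card_edgeFinset]
    omega
  obtain ⟨a, b, hab, he⟩ := Fintype.exists_ne_map_eq_of_card_lt
    (fun t => (⟨s(t, f t), T.mem_edgeSet.mpr (hf t)⟩ : T.edgeSet)) hcard
  simp only [Subtype.mk.injEq, Sym2.eq_iff] at he
  rcases he with ⟨rfl, -⟩ | ⟨rfl, hb⟩
  · exact absurd rfl hab
  · exact ⟨b, hb⟩

end SimpleGraph

namespace TreeDecomp

variable {V ι : Type*} {G : SimpleGraph V} (td : TreeDecomp G ι)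

lemma exists_walk_of_walk {u v : V} (p : G.Walk u v) {s r : ι} (hs : u ∈ td.bag s)
    (hr : v ∈ td.bag r) : ∃ q : td.T.Walk s r, ∀ x ∈ q.support, ∃ w ∈ p.support, w ∈ td.bag x := by
  induction p generalizing s with
  | nil =>
    obtain ⟨q, hq⟩ := exists_walk_of_connected_induce (td.bag_connected _) hs hr
    exact ⟨q, fun x hx => ⟨_, Walk.start_mem_support _, hq x hx⟩⟩
  | cons h p ih =>
    obtain ⟨x, hux, hwx⟩ := td.bag_edge _ _ h
    obtain ⟨q₁, hq₁⟩ := exists_walk_of_connected_induce (td.bag_connected _) hs hux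
    obtain ⟨q₂, hq₂⟩ := ih hwx hr
    refine ⟨q₁.append q₂, fun y hy => ?_⟩
    rcases (Walk.mem_support_append_iff _ _).mp hy with hy | hy
    · exact ⟨_, Walk.start_mem_support _, hq₁ y hy⟩
    · obtain ⟨w, hw, hwy⟩ := hq₂ y hy
      exact ⟨w, by simp [hw], hwy⟩

lemma exists_adj_forall_walk_notMem_support {t : ι} {A : Set V}
    (C : (G.induce (A \ td.bag t)).ConnectedComponent) :
    ∃ t', td.T.Adj t t' ∧ ∀ v ∈ C.supp, ∀ a, (v : V) ∈ td.bag a →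
      ∃ q : td.T.Walk t' a, t ∉ q.support := by
  obtain ⟨v₀, hv₀⟩ := C.nonempty_supp
  obtain ⟨r, hr⟩ := td.bag_nonempty v₀
  obtain ⟨p, hp⟩ := td.isTree.connected.exists_isPath t r
  cases p with
  | nil => exact absurd hr v₀.2.2
  | @cons _ t' _ hadj p =>
    refine ⟨t', hadj, fun v hv a hva => ?_⟩
    obtain ⟨w⟩ := C.reachable_of_mem_supp hv₀ hv
    obtain ⟨q, hq⟩ := td.exists_walk_of_walk (w.map (Embedding.induce _).toHom) hr hva
    refine ⟨p.append q, fun ht => ?_⟩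
    rcases (Walk.mem_support_append_iff _ _).mp ht with ht | ht
    · exact ((Walk.cons_isPath_iff _ _).mp hp).2 ht
    · obtain ⟨x, hx, hxt⟩ := hq t ht
      rw [Walk.support_map, List.mem_map] at hx
      obtain ⟨y, -, rfl⟩ := hx
      exact y.2.2 hxt

end TreeDecomp

/-- Given a tree decomposition of `G` and a set `A` of vertices, some bag `B_t` is a
`1/2`-balanced separator of `A`: every connected component of `G[A \ B_t]` has at most
`|A|/2` vertices. -/
theorem stmt2 {V ι : Type*} [Fintype V] [Fintype ι] (G : SimpleGraph V)
    (td : TreeDecomp G ι) (A : Set V) :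
    ∃ t : ι, ∀ C : (G.induce (A \ td.bag t)).ConnectedComponent,
      2 * C.supp.ncard ≤ A.ncard := by
  by_contra! hbig
  choose C hC using hbig
  choose f hadj hbranch using fun t => td.exists_adj_forall_walk_notMem_support (C t)
  obtain ⟨t, ht⟩ := td.isTree.exists_apply_apply_eq f hadj
  have hsub : ∀ s, Subtype.val '' (C s).supp ⊆ A := fun s => by
    rintro _ ⟨x, -, rfl⟩
    exact x.2.1
  have hcard : ∀ s, (Subtype.val '' (C s).supp).ncard = (C s).supp.ncard := fun s =>
    Set.ncard_image_of_injective _ Subtype.val_injective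
  obtain ⟨_, ⟨v, hv, rfl⟩, ⟨v', hv', hvv'⟩⟩ := Set.inter_nonempty_of_ncard_lt_ncard_add_ncard
    A.toFinite (hsub t) (hsub (f t)) (by rw [hcard, hcard]; linarith [hC t, hC (f t)])
  obtain ⟨a, ha⟩ := td.bag_nonempty v
  obtain ⟨q, hq⟩ := hbranch t v hv a ha
  obtain ⟨q', hq'⟩ := hbranch (f t) v' hv' a (hvv' ▸ ha)
  exact hq' (td.isTree.isAcyclic.mem_support_of_adj (hadj (f t)) q q' (by rwa [ht]))
end

section
/- Let G be a graph admitting a tree decomposition in which any two vertices sharing a bag are at graph distance at most k. Let A ⊆ V(G) be a set such that G[A] is connected. Then every shortest path in G between two vertices a, b ∈ A is contained in the set of vertices at distance at most 3k/2 from A. -/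
/-!
Let `v` lie on the geodesic and pick a bag `tv ∋ v`. If `tv` meets `A` we are done. Otherwise
walk in the tree from a bag of `a` to `tv` and stop at the first edge `st` leaving the bags that
meet `A`, so `bag s` contains some `w ∈ A` and `bag t` does not. Since `G[A]` is connected, no
vertex of `A` has a bag on the `t`-side of `st`, while `v` does; hence both halves `a → v` and
`v → b` of the geodesic meet the adhesion `bag s ∩ bag t`, at `x` and `y`. The points `w, x, y`
share `bag s`, so they are pairwise within `k`, and `dist x v + dist v y ≤ dist x y ≤ k` because
`v` lies between them on a geodesic. Thus `v` is within `k / 2` of `x` or `y`, and within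
`3k / 2` of `w`.
-/

open SimpleGraph

namespace SimpleGraph

variable {V : Type*} {G : SimpleGraph V}

lemma Walk.IsPath.exists_adj_reachable_deleteEdges (S : Set V) {u v : V} {p : G.Walk u v}
    (hp : p.IsPath) (hu : u ∈ S) (hv : v ∉ S) :
    ∃ s t, G.Adj s t ∧ s ∈ S ∧ t ∉ S ∧ (G.deleteEdges {s(s, t)}).Reachable t v := by
  induction p with
  | nil => exact absurd hu hv
  | @cons c m d hcm q ih =>
    by_cases hm : m ∈ S
    · exact ih hp.of_cons hm hv
    refine ⟨c, m, hcm, hu, hm, (q.transfer _ fun e he => ?_).reachable⟩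
    rw [edgeSet_deleteEdges]
    refine ⟨q.edges_subset_edgeSet he, fun hec => ?_⟩
    rw [Set.mem_singleton_iff] at hec
    subst hec
    exact ((Walk.cons_isPath_iff _ _).mp hp).2 (q.fst_mem_support_of_mem_edges he)

lemma IsBridge.eq_of_adj_of_reachable_of_not_reachable {s t u u' : V}
    (hbr : G.IsBridge s(s, t)) (huu' : G.Adj u u')
    (hu : (G.deleteEdges {s(s, t)}).Reachable t u)
    (hu' : ¬ (G.deleteEdges {s(s, t)}).Reachable t u') : u = t ∧ u' = s := by
  by_cases he : s(u, u') = s(s, t)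
  · rcases Sym2.eq_iff.mp he with ⟨rfl, rfl⟩ | ⟨rfl, rfl⟩
    · exact absurd hu.symm (isBridge_iff.mp hbr)
    · exact ⟨rfl, rfl⟩
  · exact absurd (hu.trans (Adj.reachable (deleteEdges_adj.mpr ⟨huu', he⟩))) hu'

lemma Walk.dist_add_dist_le_of_mem_support_append {a b v x y : V} (q : G.Walk a v)
    (r : G.Walk v b) (hqr : (q.append r).length = G.dist a b) (hx : x ∈ q.support)
    (hy : y ∈ r.support) : G.dist x v + G.dist v y ≤ G.dist x y := by
  classical
  have hq := congrArg Walk.length (q.take_spec hx)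
  have hr := congrArg Walk.length (r.take_spec hy)
  rw [Walk.length_append] at hq hr hqr
  have hab : G.dist a b ≤ G.dist a x + (G.dist x y + G.dist y b) :=
    (q.takeUntil x hx).reachable.dist_triangle_left b |>.trans <| by
      gcongr; exact (r.dropUntil y hy).reachable.dist_triangle_right x
  have := dist_le (q.takeUntil x hx)
  have := dist_le (q.dropUntil x hx)
  have := dist_le (r.takeUntil y hy)
  have := dist_le (r.dropUntil y hy)
  omega

lemma Walk.two_mul_dist_le_of_mem_support_append {a b v x y w : V} {k : ℕ} (q : G.Walk a v)
    (r : G.Walk v b) (hqr : (q.append r).length = G.dist a b) (hx : x ∈ q.support)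
    (hy : y ∈ r.support) (hwx : G.dist w x ≤ k) (hwy : G.dist w y ≤ k)
    (hxy : G.dist x y ≤ k) : 2 * G.dist w v ≤ 3 * k := by
  classical
  have hxvy := q.dist_add_dist_le_of_mem_support_append r hqr hx hy
  have hwxv := (q.dropUntil x hx).reachable.dist_triangle_right w
  have hwyv := (r.takeUntil y hy).reachable.symm.dist_triangle_right w
  rw [dist_comm (u := v)] at hxvy
  omega

end SimpleGraph

namespace TreeDecomp

variable {V ι : Type*} {G : SimpleGraph V} (td : TreeDecomp G ι) {s t : ι}

lemma mem_bag_of_reachable_of_not_reachable (hbr : td.T.IsBridge s(s, t)) {u : V} {t₁ t₂ : ι}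
    (h₁ : u ∈ td.bag t₁) (hR₁ : (td.T.deleteEdges {s(s, t)}).Reachable t t₁)
    (h₂ : u ∈ td.bag t₂) (hR₂ : ¬ (td.T.deleteEdges {s(s, t)}).Reachable t t₂) :
    u ∈ td.bag s ∧ u ∈ td.bag t := by
  obtain ⟨W⟩ := (td.bag_connected u).preconnected ⟨t₁, h₁⟩ ⟨t₂, h₂⟩
  obtain ⟨e, -, he₁, he₂⟩ :=
    W.exists_boundary_dart {x | (td.T.deleteEdges {s(s, t)}).Reachable t x} hR₁ hR₂
  obtain ⟨hfst, hsnd⟩ := hbr.eq_of_adj_of_reachable_of_not_reachable e.adj he₁ he₂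
  exact ⟨hsnd ▸ e.snd.2, hfst ▸ e.fst.2⟩

lemma mem_bag_of_adj_of_reachable (hbr : td.T.IsBridge s(s, t)) {c m : V} (hcm : G.Adj c m)
    (hc : ∀ t', c ∈ td.bag t' → ¬ (td.T.deleteEdges {s(s, t)}).Reachable t t') {t₁ : ι}
    (hm : m ∈ td.bag t₁) (hR : (td.T.deleteEdges {s(s, t)}).Reachable t t₁) :
    m ∈ td.bag s ∧ m ∈ td.bag t := by
  obtain ⟨t', hct', hmt'⟩ := td.bag_edge c m hcm
  exact td.mem_bag_of_reachable_of_not_reachable hbr hm hR hmt' (hc t' hct')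

/-- The side of `t` is encoded as the component of `t` in `T` minus the edge `st`; the adhesion
`bag s ∩ bag t` separates the two sides. -/
lemma exists_mem_support_mem_bag_of_walk (hbr : td.T.IsBridge s(s, t)) {c d : V}
    (W : G.Walk c d) (hc : ∀ t', c ∈ td.bag t' → ¬ (td.T.deleteEdges {s(s, t)}).Reachable t t')
    (hd : ∃ t', d ∈ td.bag t' ∧ (td.T.deleteEdges {s(s, t)}).Reachable t t') :
    ∃ x ∈ W.support, x ∈ td.bag s ∧ x ∈ td.bag t := by
  obtain ⟨e, he, he₁, he₂⟩ := W.exists_boundary_dart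
    {x | ∀ t', x ∈ td.bag t' → ¬ (td.T.deleteEdges {s(s, t)}).Reachable t t'} hc
    fun h => by obtain ⟨t', hdt', hR⟩ := hd; exact h t' hdt' hR
  simp only [Set.mem_ofPred_eq, not_forall, not_not] at he₂
  obtain ⟨t₁, hm, hR⟩ := he₂
  exact ⟨e.snd, W.dart_snd_mem_support_of_mem_darts he,
    td.mem_bag_of_adj_of_reachable hbr e.adj he₁ hm hR⟩

lemma not_reachable_of_mem_bag_of_induce_connected (hbr : td.T.IsBridge s(s, t)) {A : Set V}
    (hA : (G.induce A).Connected) {w : V} (hwA : w ∈ A) (hws : w ∈ td.bag s)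
    (ht : ∀ u ∈ A, u ∉ td.bag t) :
    ∀ u ∈ A, ∀ t', u ∈ td.bag t' → ¬ (td.T.deleteEdges {s(s, t)}).Reachable t t' := by
  have hw : ∀ t', w ∈ td.bag t' → ¬ (td.T.deleteEdges {s(s, t)}).Reachable t t' :=
    fun t' hwt' hR => ht w hwA <| (td.mem_bag_of_reachable_of_not_reachable hbr hwt' hR hws
      fun h => isBridge_iff.mp hbr h.symm).2
  intro u hu t' hut' hR
  obtain ⟨W⟩ := hA.preconnected ⟨w, hwA⟩ ⟨u, hu⟩
  obtain ⟨e, -, he₁, he₂⟩ := W.exists_boundary_dart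
    {x | ∀ t', x.1 ∈ td.bag t' → ¬ (td.T.deleteEdges {s(s, t)}).Reachable t t'} hw
    fun h => h t' hut' hR
  simp only [Set.mem_ofPred_eq, not_forall, not_not] at he₂
  obtain ⟨t₁, hm, hR₁⟩ := he₂
  exact ht _ e.snd.2 (td.mem_bag_of_adj_of_reachable hbr e.adj he₁ hm hR₁).2

end TreeDecomp

theorem stmt3_general {V ι : Type*} (G : SimpleGraph V)
    (td : TreeDecomp G ι) (k : ℕ)
    (hk : ∀ t, ∀ u ∈ td.bag t, ∀ v ∈ td.bag t, G.dist u v ≤ k)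
    (A : Set V) (hA : (G.induce A).Connected)
    (a b : V) (ha : a ∈ A) (hb : b ∈ A) (p : G.Walk a b) (hp : p.length = G.dist a b) :
    ∀ v ∈ p.support, ∃ w ∈ A, 2 * G.dist w v ≤ 3 * k := by
  classical
  intro v hv
  obtain ⟨tv, hvtv⟩ := td.bag_nonempty v
  by_cases htvA : ∃ w ∈ A, w ∈ td.bag tv
  · obtain ⟨w, hwA, hwtv⟩ := htvA
    exact ⟨w, hwA, by linarith [hk tv w hwtv v hvtv]⟩
  obtain ⟨ta, hata⟩ := td.bag_nonempty a
  obtain ⟨P⟩ := td.isTree.connected.preconnected ta tv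
  obtain ⟨s, t, hst, ⟨w, hwA, hws⟩, htA, htv⟩ :=
    P.toPath.2.exists_adj_reachable_deleteEdges {t | ∃ w ∈ A, w ∈ td.bag t} ⟨a, ha, hata⟩ htvA
  have hbr := isAcyclic_iff_forall_adj_isBridge.mp td.isTree.isAcyclic hst
  have hAside := td.not_reachable_of_mem_bag_of_induce_connected hbr hA hwA hws
    fun u hu hut => htA ⟨u, hu, hut⟩
  obtain ⟨x, hx, hxs, -⟩ := td.exists_mem_support_mem_bag_of_walk hbr (p.takeUntil v hv)
    (hAside a ha) ⟨tv, hvtv, htv⟩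
  obtain ⟨y, hy, hys, -⟩ := td.exists_mem_support_mem_bag_of_walk hbr (p.dropUntil v hv).reverse
    (hAside b hb) ⟨tv, hvtv, htv⟩
  rw [Walk.support_reverse, List.mem_reverse] at hy
  exact ⟨w, hwA, Walk.two_mul_dist_le_of_mem_support_append _ _ (by rwa [p.take_spec hv]) hx hy
    (hk s w hws x hxs) (hk s w hws y hys) (hk s x hxs y hys)⟩

/-- If `G` has a tree decomposition in which any two vertices sharing a bag are at distance
at most `k` (treelength at most `k`), and `G[A]` is connected, then every shortest path in `G`
between two vertices `a, b ∈ A` stays within distance `3k/2` of `A`. -/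
theorem stmt3 {V ι : Type*} [Fintype V] [Fintype ι] (G : SimpleGraph V) (hG : G.Connected)
    (td : TreeDecomp G ι) (k : ℕ)
    (hk : ∀ t, ∀ u ∈ td.bag t, ∀ v ∈ td.bag t, G.dist u v ≤ k)
    (A : Set V) (hA : (G.induce A).Connected)
    (a b : V) (ha : a ∈ A) (hb : b ∈ A) (p : G.Walk a b) (hp : p.length = G.dist a b) :
    ∀ v ∈ p.support, ∃ w ∈ A, 2 * G.dist w v ≤ 3 * k :=
  stmt3_general G td k hk A hA a b ha hb p hp
end

section
/- Let G be a connected chordal graph, let v₀ ∈ V(G), and let L_j = {v : d(v₀,v) = j}. Then for any i ≥ 1 and any vertex u ∈ L_i, the set N(u) ∩ L_{i−1} induces a clique in G. -/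
/-!
Suppose `v` and `w` are not adjacent. Among the `v`–`w` walks all of whose vertices lie in
`{v, w} ∪ L_{<i-1}` (such walks exist, through `v₀`) take one that is shortest on its own vertex
set: it is a chordless path of length at least two. Its vertices other than `v, w` are too close
to `v₀` to be neighbours of `u ∈ L_i`, so closing it up through `u` yields a chordless cycle of
length at least four.
-/

/-- A graph is chordal if it has no induced cycle of length at least 4: every cycle all of
whose chords are cycle edges (i.e. an induced cycle) has length at most 3. -/
def IsChordal {V : Type*} (G : SimpleGraph V) : Prop :=
  ∀ (a : V) (c : G.Walk a a), c.IsCycle →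
    (∀ u ∈ c.support, ∀ v ∈ c.support, G.Adj u v → s(u, v) ∈ c.edges) →
    c.length ≤ 3

namespace SimpleGraph.Walk

variable {V : Type*} {G : SimpleGraph V} {a b x y : V}

def IsShortestOnSupport (p : G.Walk a b) : Prop :=
  ∀ q : G.Walk a b, q.support ⊆ p.support → p.length ≤ q.length

theorem exists_isShortestOnSupport (q : G.Walk a b) :
    ∃ p : G.Walk a b, p.support ⊆ q.support ∧ p.IsShortestOnSupport := by
  induction h : q.length using Nat.strong_induction_on generalizing q with
  | _ n ih =>
  by_cases hq : q.IsShortestOnSupport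
  · exact ⟨q, List.Subset.refl _, hq⟩
  · obtain ⟨r, hrq, hlt⟩ :
        ∃ r : G.Walk a b, r.support ⊆ q.support ∧ r.length < q.length := by
      simpa [IsShortestOnSupport] using hq
    obtain ⟨p, hpr, hp⟩ := ih _ (h ▸ hlt) r rfl
    exact ⟨p, List.Subset.trans hpr hrq, hp⟩

theorem IsShortestOnSupport.isPath {p : G.Walk a b} (hp : p.IsShortestOnSupport) : p.IsPath := by
  classical
  rw [← bypass_eq_self_of_length_le_length_bypass p (hp _ (support_bypass_subset_support p))]
  exact bypass_isPath p

theorem IsShortestOnSupport.mem_edges_of_adj {p₁ : G.Walk a x} {r : G.Walk x y}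
    {p₂ : G.Walk y b} (hp : (p₁.append (r.append p₂)).IsShortestOnSupport) (h : G.Adj x y) :
    s(x, y) ∈ (p₁.append (r.append p₂)).edges := by
  -- replacing `r` by the edge `x y` uses no new vertex, so `r` cannot be longer than that edge
  have hle := hp (p₁.append (cons h p₂)) fun z hz => by
    simp only [mem_support_append_iff, support_cons, List.mem_cons] at hz ⊢
    rcases hz with hz | rfl | hz
    · exact Or.inl hz
    · simp
    · simp [hz]
  simp only [length_append, length_cons] at hle
  suffices s(x, y) ∈ r.edges by simp [this]
  match r, hle with
  | nil, _ => exact absurd rfl h.ne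
  | cons _ nil, _ => simp
  | cons _ (cons _ _), hle => simp only [length_cons] at hle; omega

theorem IsShortestOnSupport.isChordless {p : G.Walk a b} (hp : p.IsShortestOnSupport) :
    p.IsChordless := by
  refine isChordless_iff_forall_mem_edges.mpr fun x y hx hy hxy => ?_
  obtain ⟨p₁, p₂, rfl⟩ := mem_support_iff_exists_append.mp hx
  rcases (mem_support_append_iff _ _).mp hy with hy | hy
  · obtain ⟨q₁, q₂, rfl⟩ := mem_support_iff_exists_append.mp hy
    rw [← append_assoc] at hp ⊢
    rw [Sym2.eq_swap]
    exact hp.mem_edges_of_adj hxy.symm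
  · obtain ⟨q₁, q₂, rfl⟩ := mem_support_iff_exists_append.mp hy
    exact hp.mem_edges_of_adj hxy

end SimpleGraph.Walk

namespace SimpleGraph

variable {V : Type*} {G : SimpleGraph V} {a t x : V}

theorem dist_lt_of_mem_support_of_length_eq_dist {q : G.Walk a t} (hq : q.length = G.dist a t)
    (hx : x ∈ q.support) (hxt : x ≠ t) : G.dist a x < G.dist a t := by
  classical
  exact hq ▸ (dist_le _).trans_lt (Walk.length_takeUntil_lt_length hx hxt)

end SimpleGraph

open SimpleGraph Walk

namespace IsChordal

variable {V : Type*} {G : SimpleGraph V}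

theorem length_le_three (hch : IsChordal G) {a : V} {c : G.Walk a a} (hc : c.IsCycle)
    (hcc : c.IsChordless) : c.length ≤ 3 :=
  hch a c hc fun _ hx _ hy h => hcc.mem_edges hx hy h

theorem adj_of_isChordless_path (hch : IsChordal G) {u v w : V} {p : G.Walk v w}
    (hp : p.IsPath) (hpc : p.IsChordless) (hu : u ∉ p.support) (huv : G.Adj u v)
    (huw : G.Adj u w) (hnbr : ∀ y ∈ p.support, G.Adj u y → y = v ∨ y = w)
    (hvw : v ≠ w) : G.Adj v w := by
  set c := cons huv (p.concat huw.symm)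
  have hc : c.IsCycle := by
    refine (cons_isCycle_iff _ _).mpr ⟨hp.concat hu huw.symm, ?_⟩
    simp only [edges_concat, List.concat_eq_append, List.mem_append, List.mem_singleton, not_or]
    refine ⟨fun h => hu (p.fst_mem_support_of_mem_edges h), fun h => ?_⟩
    grind
  have hcc : c.IsChordless := by
    have hu' : ∀ y ∈ p.support, G.Adj u y → s(u, y) ∈ c.edges := fun y hy h => by
      rcases hnbr y hy h with rfl | rfl <;> simp [c, Sym2.eq_swap]
    have hsupp : ∀ z ∈ c.support, z = u ∨ z ∈ p.support := fun z hz => by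
      simp only [c, support_cons, support_concat, List.mem_cons, List.mem_append] at hz
      tauto
    refine isChordless_iff_forall_mem_edges.mpr fun x y hx hy hxy => ?_
    rcases hsupp x hx with rfl | hxp <;> rcases hsupp y hy with rfl | hyp
    · exact absurd rfl hxy.ne
    · exact hu' y hyp hxy
    · rw [Sym2.eq_swap]
      exact hu' x hxp hxy.symm
    · simp [c, hpc.mem_edges hxp hyp hxy]
  have hlen : p.length ≤ 1 := by
    have := hch.length_le_three hc hcc
    simp only [c, length_cons, length_concat] at this
    omega
  have hp0 : p.length ≠ 0 := fun h => hvw (eq_of_length_eq_zero h)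
  exact adj_of_length_eq_one (p := p) (by omega)

end IsChordal

theorem stmt4_general {V : Type*} (G : SimpleGraph V) (hG : G.Connected)
    (hch : IsChordal G) (v₀ : V) (i : ℕ)
    (u v w : V) (hu : G.dist v₀ u = i)
    (huv : G.Adj u v) (huw : G.Adj u w)
    (hv : G.dist v₀ v = i - 1) (hw : G.dist v₀ w = i - 1) (hvw : v ≠ w) :
    G.Adj v w := by
  obtain ⟨qv, hqv⟩ := hG.exists_walk_length_eq_dist v₀ v
  obtain ⟨qw, hqw⟩ := hG.exists_walk_length_eq_dist v₀ w
  obtain ⟨p, hpq, hp⟩ := (qv.reverse.append qw).exists_isShortestOnSupport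
  have hlow : ∀ y ∈ p.support, y = v ∨ y = w ∨ G.dist v₀ y < i - 1 := fun y hy => by
    rcases (mem_support_append_iff _ _).mp (hpq hy) with hy | hy
    · rw [support_reverse, List.mem_reverse] at hy
      rcases eq_or_ne y v with rfl | hyv
      · exact Or.inl rfl
      · exact Or.inr (Or.inr (hv ▸ dist_lt_of_mem_support_of_length_eq_dist hqv hy hyv))
    · rcases eq_or_ne y w with rfl | hyw
      · exact Or.inr (Or.inl rfl)
      · exact Or.inr (Or.inr (hw ▸ dist_lt_of_mem_support_of_length_eq_dist hqw hy hyw))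
  have hfar : ∀ y, G.dist v₀ y < i - 1 → ¬ G.Adj u y := fun y hy h => by
    have := h.symm.reachable.dist_triangle_right v₀
    rw [dist_eq_one_iff_adj.mpr h.symm] at this
    omega
  refine hch.adj_of_isChordless_path hp.isPath hp.isChordless (fun h => ?_) huv huw
    (fun y hy h => (hlow y hy).imp_right (Or.resolve_right · (hfar y · h))) hvw
  rcases hlow u h with rfl | rfl | h
  · exact huv.ne rfl
  · exact huw.ne rfl
  · omega

/-- In a connected chordal graph, for `u` in the distance layer `L_i` from `v₀`,
the set `N(u) ∩ L_{i-1}` induces a clique. -/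
theorem stmt4 {V : Type*} [Fintype V] (G : SimpleGraph V) (hG : G.Connected)
    (hch : IsChordal G) (v₀ : V) (i : ℕ) (hi : 1 ≤ i)
    (u v w : V) (hu : G.dist v₀ u = i)
    (huv : G.Adj u v) (huw : G.Adj u w)
    (hv : G.dist v₀ v = i - 1) (hw : G.dist v₀ w = i - 1) (hvw : v ≠ w) :
    G.Adj v w :=
  stmt4_general G hG hch v₀ i u v w hu huv huw hv hw hvw
end

section
/- Let G be a connected chordal graph, v₀ ∈ V(G), and L_j = {v : d(v₀,v) = j}. If u, v ∈ L_i are adjacent in G, then either N(u) ∩ L_{i−1} ⊆ N[v] ∩ L_{i−1} or N[v] ∩ L_{i−1} ⊆ N(u) ∩ L_{i−1}. -/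
namespace SimpleGraph

variable {V : Type*} {G : SimpleGraph V}

namespace Walk

variable {a b : V}

lemma exists_length_lt_of_adj_getVert (p : G.Walk a b) {m n : ℕ} (hmn : m + 1 < n)
    (hn : n ≤ p.length) (hadj : G.Adj (p.getVert m) (p.getVert n)) :
    ∃ q : G.Walk a b, q.length < p.length ∧ q.support ⊆ p.support := by
  refine ⟨(p.take m).append (cons hadj (p.drop n)), ?_, ?_⟩
  · simp only [length_append, length_cons, take_length, drop_length]
    omega
  · intro z hz
    simp only [mem_support_append_iff, support_cons, List.mem_cons] at hz
    rcases hz with hz | rfl | hz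
    · exact (p.isSubwalk_take m).support_subset hz
    · exact p.getVert_mem_support m
    · exact (p.isSubwalk_drop n).support_subset hz

lemma exists_length_lt_of_adj_of_notMem_edges (p : G.Walk a b) {x y : V} (hx : x ∈ p.support)
    (hy : y ∈ p.support) (hxy : G.Adj x y) (hxy' : s(x, y) ∉ p.edges) :
    ∃ q : G.Walk a b, q.length < p.length ∧ q.support ⊆ p.support := by
  obtain ⟨m, rfl, hm⟩ := mem_support_iff_exists_getVert.mp hx
  obtain ⟨n, rfl, hn⟩ := mem_support_iff_exists_getVert.mp hy
  clear hx hy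
  wlog hmn : m < n generalizing m n
  · refine this n hn m hm hxy.symm (by rwa [Sym2.eq_swap]) (lt_of_le_of_ne (not_lt.mp hmn) ?_)
    rintro rfl
    exact hxy.ne rfl
  have hsucc : n ≠ m + 1 := by
    rintro rfl
    exact hxy' (p.mk_mem_edges_iff_exists.mpr ⟨m, by omega, rfl⟩)
  exact p.exists_length_lt_of_adj_getVert (by omega) hn hxy

lemma isChordless_of_forall_length_le (p : G.Walk a b)
    (hmin : ∀ q : G.Walk a b, q.support ⊆ p.support → p.length ≤ q.length) :
    p.IsChordless := by
  refine isChordless_iff_forall_mem_edges.mpr fun x y hx hy hxy => ?_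
  by_contra hxy'
  obtain ⟨q, hlt, hsub⟩ := p.exists_length_lt_of_adj_of_notMem_edges hx hy hxy hxy'
  exact (hmin q hsub).not_gt hlt

lemma exists_isPath_isChordless_support_subset (w : G.Walk a b) :
    ∃ p : G.Walk a b, p.IsPath ∧ p.IsChordless ∧ p.support ⊆ w.support := by
  classical
  have hex : ∃ k, ∃ q : G.Walk a b, q.length = k ∧ q.support ⊆ w.support :=
    ⟨_, w, rfl, List.Subset.refl _⟩
  obtain ⟨q, hq, hqw⟩ := Nat.find_spec hex
  have hmin : ∀ r : G.Walk a b, r.support ⊆ w.support → Nat.find hex ≤ r.length :=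
    fun r hr => Nat.find_min' hex ⟨r, rfl, hr⟩
  have hbw : q.bypass.support ⊆ w.support := fun z hz => hqw (q.support_bypass_subset_support hz)
  refine ⟨q.bypass, q.bypass_isPath, isChordless_of_forall_length_le _ fun r hr => ?_, hbw⟩
  calc q.bypass.length ≤ q.length := q.length_bypass_le_length
    _ ≤ r.length := hq ▸ hmin r fun z hz => hbw (hr hz)

lemma dist_lt_length_of_mem_support (p : G.Walk a b) {z : V} (hz : z ∈ p.support)
    (hzb : z ≠ b) : G.dist a z < p.length := by
  classical
  exact (dist_le _).trans_lt (p.length_takeUntil_lt_length hz hzb)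

end Walk

open Walk

lemma Connected.exists_isPath_isChordless_dist_lt (hG : G.Connected) (v₀ : V) {a b : V}
    (hab : G.dist v₀ a = G.dist v₀ b) :
    ∃ p : G.Walk a b, p.IsPath ∧ p.IsChordless ∧
      ∀ z ∈ p.support, z = a ∨ z = b ∨ G.dist v₀ z < G.dist v₀ a := by
  obtain ⟨pa, hpa⟩ := hG.exists_walk_length_eq_dist v₀ a
  obtain ⟨pb, hpb⟩ := hG.exists_walk_length_eq_dist v₀ b
  obtain ⟨p, hp, hpc, hsub⟩ := (pa.reverse.append pb).exists_isPath_isChordless_support_subset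
  refine ⟨p, hp, hpc, fun z hz => ?_⟩
  by_cases hza : z = a
  · exact .inl hza
  by_cases hzb : z = b
  · exact .inr (.inl hzb)
  have hz := hsub hz
  rw [mem_support_append_iff, support_reverse, List.mem_reverse] at hz
  rcases hz with hz | hz
  · exact .inr (.inr (hpa ▸ pa.dist_lt_length_of_mem_support hz hza))
  · exact .inr (.inr (hab ▸ hpb ▸ pb.dist_lt_length_of_mem_support hz hzb))

end SimpleGraph

open SimpleGraph Walk

theorem IsChordal.eq_of_isChordless_of_adj {V : Type*} {G : SimpleGraph V} (hch : IsChordal G)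
    {a b u v : V} (p : G.Walk b a) (hp : p.IsPath) (hpc : p.IsChordless) (huv : G.Adj u v)
    (hvb : G.Adj v b) (hau : G.Adj a u) (hup : u ∉ p.support) (hvp : v ∉ p.support)
    (hu : ∀ z ∈ p.support, G.Adj u z → z = a) (hv : ∀ z ∈ p.support, G.Adj v z → z = b) :
    a = b := by
  have hbp := p.start_mem_support
  have hap := p.end_mem_support
  set C : G.Walk u u := cons huv (cons hvb (p.concat hau))
  have hC : C.IsCycle := by
    refine (cons_isCycle_iff _ huv).mpr ⟨(hp.concat hup hau).cons ?_, ?_⟩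
    · simp [support_concat, hvp, huv.ne.symm]
    · simp only [edges_cons, edges_concat, List.concat_eq_append, List.mem_cons, List.mem_append,
        Sym2.eq_iff, not_or]
      grind [Adj.ne, fst_mem_support_of_mem_edges]
  have hCc : ∀ x ∈ C.support, ∀ y ∈ C.support, G.Adj x y → s(x, y) ∈ C.edges := by
    have hpe := isChordless_iff_forall_mem_edges.mp hpc
    simp only [C, support_cons, support_concat, edges_cons, edges_concat, List.concat_eq_append,
      List.mem_cons, List.mem_append, List.not_mem_nil, or_false]
    rintro x (rfl | rfl | hx | rfl) y (rfl | rfl | hy | rfl) hxy <;>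
      grind [Adj.ne, Sym2.eq_swap, Adj.symm]
  have hlen : C.length = p.length + 3 := by simp [C]
  have := hch u C hC hCc
  exact (eq_of_length_eq_zero (p := p) (by omega)).symm

theorem stmt5_general {V : Type*} (G : SimpleGraph V) (hG : G.Connected)
    (hch : IsChordal G) (v₀ : V) (i : ℕ) (hi : 1 ≤ i)
    (u v : V) (hu : G.dist v₀ u = i) (hv : G.dist v₀ v = i) (huv : G.Adj u v) :
    ({x | G.Adj u x ∧ G.dist v₀ x = i - 1} ⊆
        {x | (x = v ∨ G.Adj v x) ∧ G.dist v₀ x = i - 1}) ∨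
      ({x | (x = v ∨ G.Adj v x) ∧ G.dist v₀ x = i - 1} ⊆
        {x | G.Adj u x ∧ G.dist v₀ x = i - 1}) := by
  by_contra! h
  obtain ⟨⟨a, ⟨hua, ha⟩, hav⟩, ⟨b, ⟨hvb, hb⟩, hub⟩⟩ := And.imp Set.not_subset.mp Set.not_subset.mp h
  simp only [Set.mem_ofPred_eq, ha, hb, and_true, not_or] at hav hub
  have hvb : G.Adj v b := hvb.resolve_left (by rintro rfl; omega)
  have hab : a ≠ b := by rintro rfl; exact hav.2 hvb
  obtain ⟨p, hp, hpc, hlow⟩ := hG.exists_isPath_isChordless_dist_lt v₀ (hb.trans ha.symm)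
  refine hab (hch.eq_of_isChordless_of_adj p hp hpc huv hvb hua.symm ?_ ?_ ?_ ?_)
  · intro h; rcases hlow u h with rfl | rfl | h <;> omega
  · intro h; rcases hlow v h with rfl | rfl | h <;> omega
  · intro z hz huz
    rcases hlow z hz with rfl | rfl | h
    · exact absurd huz hub
    · rfl
    · rcases huz.diff_dist_adj (u := v₀) with h' | h' | h' <;> omega
  · intro z hz hvz
    rcases hlow z hz with rfl | rfl | h
    · rfl
    · exact absurd hvz hav.2
    · rcases hvz.diff_dist_adj (u := v₀) with h' | h' | h' <;> omega

/-- In a connected chordal graph, if `u, v` in the distance layer `L_i` from `v₀` are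
adjacent, then `N(u) ∩ L_{i-1} ⊆ N[v] ∩ L_{i-1}` or `N[v] ∩ L_{i-1} ⊆ N(u) ∩ L_{i-1}`. -/
theorem stmt5 {V : Type*} [Fintype V] (G : SimpleGraph V) (hG : G.Connected)
    (hch : IsChordal G) (v₀ : V) (i : ℕ) (hi : 1 ≤ i)
    (u v : V) (hu : G.dist v₀ u = i) (hv : G.dist v₀ v = i) (huv : G.Adj u v) :
    ({x | G.Adj u x ∧ G.dist v₀ x = i - 1} ⊆
        {x | (x = v ∨ G.Adj v x) ∧ G.dist v₀ x = i - 1}) ∨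
      ({x | (x = v ∨ G.Adj v x) ∧ G.dist v₀ x = i - 1} ⊆
        {x | G.Adj u x ∧ G.dist v₀ x = i - 1}) :=
  stmt5_general G hG hch v₀ i hi u v hu hv huv
end

section
/- Let G be a connected k-chordal graph of maximum degree Δ, let v₀ ∈ V(G), let L_j = {v : d(v₀,v) = j}, and let G₁ = G[L_{≤ i−1}] for some i ≥ 2. Then for every u ∈ L_i and every pair v, w ∈ N(u) ∩ L_{i−1}, we have d_{G₁}(v, w) ≤ Δ·k. -/
/-!
Take a shortest `v`–`w` path `P` in `G₁`: it is chordless, and it avoids `u ∉ L_{≤ i-1}`.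
If `x` and `y` are consecutive neighbours of `u` along `P`, the segment of `P` from `x` to `y`
closes up with `u` into a chordless cycle, so by `k`-chordality it has length at most `k - 2`.
The at most `Δ` neighbours of `u` on `P` cut it into fewer than `Δ` such segments.
-/

def IsKChordal {V : Type*} (G : SimpleGraph V) (k : ℕ) : Prop :=
  ∀ (a : V) (c : G.Walk a a), c.IsCycle →
    (∀ u ∈ c.support, ∀ v ∈ c.support, G.Adj u v → s(u, v) ∈ c.edges) →
    c.length ≤ k

open SimpleGraph

namespace SimpleGraph.Walk

variable {V W : Type*} {G : SimpleGraph V}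

theorem exists_eq_append_first {P : V → Prop} :
    ∀ {a b : V} (q : G.Walk a b), P b →
      ∃ (x : V) (pre : G.Walk a x) (suf : G.Walk x b),
        q = pre.append suf ∧ P x ∧ ∀ y ∈ pre.support, P y → y = x
  | a, _, nil, hb => ⟨a, nil, nil, rfl, hb, by simp⟩
  | a, _, cons h r, hb => by
    by_cases ha : P a
    · exact ⟨a, nil, cons h r, rfl, ha, by simp⟩
    · obtain ⟨x, pre, suf, rfl, hx, hfirst⟩ := exists_eq_append_first r hb
      refine ⟨x, cons h pre, suf, rfl, hx, ?_⟩
      rintro y (_ | ⟨_, hy⟩) hPy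
      exacts [absurd hPy ha, hfirst y hy hPy]

theorem IsPath.eq_of_mem_support_append {a b c : V} {p : G.Walk a b} {q : G.Walk b c}
    (hpq : (p.append q).IsPath) {y : V} (hp : y ∈ p.support) (hq : y ∈ q.support) : y = b := by
  by_contra hyb
  exact hpq.ne_of_mem_support_of_append hyb hp hq rfl

theorem IsChordless.of_append_left {a b c : V} {p : G.Walk a b} {q : G.Walk b c}
    (hpq : (p.append q).IsPath) (h : (p.append q).IsChordless) : p.IsChordless := by
  rw [isChordless_iff_forall_mem_edges]
  intro y z hy hz hyz
  have hmem := h.mem_edges (by simp [hy]) (by simp [hz]) hyz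
  rw [edges_append, List.mem_append] at hmem
  refine hmem.resolve_right fun hq => hyz.ne ?_
  rw [hpq.eq_of_mem_support_append hy (q.fst_mem_support_of_mem_edges hq),
    hpq.eq_of_mem_support_append hz (q.snd_mem_support_of_mem_edges hq)]

theorem IsChordless.of_append_right {a b c : V} {p : G.Walk a b} {q : G.Walk b c}
    (hpq : (p.append q).IsPath) (h : (p.append q).IsChordless) : q.IsChordless := by
  rw [isChordless_iff_forall_mem_edges]
  intro y z hy hz hyz
  have hmem := h.mem_edges (by simp [hy]) (by simp [hz]) hyz
  rw [edges_append, List.mem_append] at hmem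
  refine hmem.resolve_left fun hp => hyz.ne ?_
  rw [hpq.eq_of_mem_support_append (p.fst_mem_support_of_mem_edges hp) hy,
    hpq.eq_of_mem_support_append (p.snd_mem_support_of_mem_edges hp) hz]

theorem mem_edges_of_length_eq_one {a b : V} (r : G.Walk a b) (hr : r.length = 1) :
    s(a, b) ∈ r.edges := by
  cases r with
  | nil => simp at hr
  | cons h r' =>
    cases r' with
    | nil => simp
    | cons => simp at hr

theorem isChordless_of_length_eq_dist {a b : V} (p : G.Walk a b) (hp : p.length = G.dist a b) :
    p.IsChordless := by
  rw [isChordless_iff_forall_mem_edges]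
  intro y z hy hz hyz
  obtain ⟨p₁, p₂, rfl⟩ := mem_support_iff_exists_append.mp hy
  rw [edges_append, List.mem_append]
  rcases (mem_support_append_iff _ _).mp hz with hz | hz
  · obtain ⟨r₁, r₂, rfl⟩ := mem_support_iff_exists_append.mp hz
    have hr₂ : r₂.length = G.dist z y :=
      length_eq_dist_of_subwalk hp ⟨r₁, p₂, by simp⟩
    rw [dist_eq_one_iff_adj.mpr hyz.symm] at hr₂
    left
    rw [edges_append, List.mem_append, Sym2.eq_swap]
    exact Or.inr (mem_edges_of_length_eq_one r₂ hr₂)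
  · obtain ⟨r₁, r₂, rfl⟩ := mem_support_iff_exists_append.mp hz
    have hr₁ : r₁.length = G.dist y z :=
      length_eq_dist_of_subwalk hp ⟨p₁, r₂, by simp [append_assoc]⟩
    rw [dist_eq_one_iff_adj.mpr hyz] at hr₁
    right
    rw [edges_append, List.mem_append]
    exact Or.inl (mem_edges_of_length_eq_one r₁ hr₁)

theorem IsChordless.map {G' : SimpleGraph W} (f : G ↪g G') {a b : V} {p : G.Walk a b}
    (h : p.IsChordless) : (p.map f.toHom).IsChordless := by
  rw [isChordless_iff_forall_mem_edges]
  intro y z hy hz hyz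
  simp only [support_map, List.mem_map] at hy hz
  obtain ⟨y, hy, rfl⟩ := hy
  obtain ⟨z, hz, rfl⟩ := hz
  rw [edges_map]
  exact List.mem_map.mpr ⟨s(y, z), h.mem_edges hy hz (f.map_adj_iff.mp hyz), rfl⟩

end SimpleGraph.Walk

section

variable {V : Type*} {G : SimpleGraph V}

theorem IsKChordal.length_add_two_le {k : ℕ} (hG : IsKChordal G k) {a x u : V} {p : G.Walk a x}
    (hp : p.IsPath) (hpc : p.IsChordless) (hu : u ∉ p.support) (hua : G.Adj u a)
    (hux : G.Adj u x) (hax : a ≠ x) (hN : ∀ y ∈ p.support, G.Adj u y → y = a ∨ y = x) :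
    p.length + 2 ≤ k := by
  set c : G.Walk u u := .cons hua (p.concat hux.symm)
  have hcyc : c.IsCycle := by
    refine (Walk.cons_isCycle_iff _ _).mpr ⟨hp.concat hu _, ?_⟩
    rw [Walk.edges_concat, List.concat_eq_append, List.mem_append, List.mem_singleton,
      Sym2.eq_iff]
    rintro (h | ⟨rfl, -⟩ | ⟨-, rfl⟩)
    exacts [hu (p.fst_mem_support_of_mem_edges h), hu p.end_mem_support, hax rfl]
  have hchordless : ∀ y ∈ c.support, ∀ z ∈ c.support, G.Adj y z → s(y, z) ∈ c.edges := by
    have hsupp : ∀ y ∈ c.support, y = u ∨ y ∈ p.support := by simp [c, or_comm]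
    intro y hy z hz hyz
    simp only [c, Walk.edges_cons, Walk.edges_concat, List.concat_eq_append, List.mem_cons,
      List.mem_append]
    rcases hsupp y hy with rfl | hyp <;> rcases hsupp z hz with rfl | hzp
    · exact absurd hyz G.irrefl
    · rcases hN z hzp hyz with rfl | rfl <;> simp [Sym2.eq_swap]
    · rcases hN y hyp hyz.symm with rfl | rfl <;> simp [Sym2.eq_swap]
    · exact Or.inr (Or.inl (hpc.mem_edges hyp hzp hyz))
  have := hG u c hcyc hchordless
  simp only [c, Walk.length_cons, Walk.length_concat] at this
  omega

theorem IsKChordal.length_add_le_mul {k : ℕ} (hG : IsKChordal G k) {a b u : V}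
    (p : G.Walk a b) (hp : p.IsPath) (hpc : p.IsChordless) (hu : u ∉ p.support)
    (hua : G.Adj u a) (hub : G.Adj u b) :
    p.length + k ≤ (G.neighborSet u ∩ {y | y ∈ p.support}).ncard * k := by
  induction hn : p.length using Nat.strong_induction_on generalizing a with | _ n ih =>
  subst hn
  cases p with
  | nil =>
    have : G.neighborSet u ∩ {y | y ∈ (Walk.nil : G.Walk b b).support} = {b} := by
      simpa using hua
    rw [this, Set.ncard_singleton, one_mul, Walk.length_nil, zero_add]
  | @cons _ a' _ h q =>
    obtain ⟨x, pre, suf, rfl, hux, hfirst⟩ := q.exists_eq_append_first (P := G.Adj u) hub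
    rw [← Walk.cons_append] at hp hpc hu ⊢
    set pre' : G.Walk a x := .cons h pre
    have hax : a ≠ x := by
      rintro rfl
      exact ((Walk.cons_isPath_iff _ _).mp hp).2 (by simp)
    have hpre : pre'.length + 2 ≤ k := by
      refine hG.length_add_two_le hp.of_append_left (hpc.of_append_left hp)
        (fun h => hu (by simp [h])) hua hux hax ?_
      rintro y (_ | ⟨_, hy⟩) hy'
      exacts [Or.inl rfl, Or.inr (hfirst y hy hy')]
    have hsuf := ih suf.length (by simp) suf hp.of_append_right
      (hpc.of_append_right hp) (fun h => hu (by simp [h])) hux rfl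
    have hcount : (G.neighborSet u ∩ {y | y ∈ suf.support}).ncard + 1 ≤
        (G.neighborSet u ∩ {y | y ∈ (pre'.append suf).support}).ncard := by
      have ha : a ∉ suf.support := fun h => hax (hp.eq_of_mem_support_append (by simp [pre']) h)
      rw [← Set.ncard_insert_of_notMem (fun h => ha h.2)
        ((List.finite_toSet _).inter_of_right _)]
      refine Set.ncard_le_ncard ?_ ((List.finite_toSet _).inter_of_right _)
      rintro y (rfl | ⟨hy, hy'⟩)
      exacts [⟨hua, by simp [pre']⟩, ⟨hy, (Walk.mem_support_append_iff _ _).mpr (Or.inr hy')⟩]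
    have := Nat.mul_le_mul_right k hcount
    rw [Walk.length_append]
    linarith

end

theorem stmt6_general {V : Type*} [Fintype V] (G : SimpleGraph V)
    (k Δ : ℕ) (hch : IsKChordal G k) (hΔ : ∀ x : V, (G.neighborSet x).ncard ≤ Δ)
    (v₀ : V) (i : ℕ) (hi : 2 ≤ i)
    (u v w : V) (hu : G.dist v₀ u = i)
    (huv : G.Adj u v) (huw : G.Adj u w)
    (hv : G.dist v₀ v = i - 1) (hw : G.dist v₀ w = i - 1) :
    (G.induce {x | G.dist v₀ x ≤ i - 1}).dist ⟨v, le_of_eq hv⟩ ⟨w, le_of_eq hw⟩ ≤ Δ * k := by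
  set S : Set V := {x | G.dist v₀ x ≤ i - 1}
  rcases eq_or_ne ((G.induce S).dist ⟨v, le_of_eq hv⟩ ⟨w, le_of_eq hw⟩) 0 with h0 | h0
  · exact h0.le.trans (Nat.zero_le _)
  obtain ⟨p, hp⟩ := exists_walk_of_dist_ne_zero h0
  set f := Embedding.induce S
  have huS : u ∉ (p.map f.toHom).support := by
    simp only [Walk.support_map, List.mem_map, not_exists, not_and]
    rintro ⟨y, hyS : G.dist v₀ y ≤ i - 1⟩ - (rfl : y = u)
    omega
  have hbound := hch.length_add_le_mul (p.map f.toHom)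
    ((p.isPath_of_length_eq_dist hp).map Subtype.val_injective)
    ((p.isChordless_of_length_eq_dist hp).map f) huS huv huw
  have hcount : (G.neighborSet u ∩ {y | y ∈ (p.map f.toHom).support}).ncard ≤ Δ :=
    (Set.ncard_le_ncard Set.inter_subset_left).trans (hΔ u)
  rw [Walk.length_map, hp] at hbound
  linarith [Nat.mul_le_mul_right k hcount]

/-- In a connected `k`-chordal graph of maximum degree `Δ`, for `u` in the layer `L_i`
(with `i ≥ 2`) and `v, w ∈ N(u) ∩ L_{i-1}`, the distance between `v` and `w` inside the
induced subgraph `G₁ = G[L_{≤ i-1}]` is at most `Δ·k`. -/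
theorem stmt6 {V : Type*} [Fintype V] (G : SimpleGraph V) (hG : G.Connected)
    (k Δ : ℕ) (hch : IsKChordal G k) (hΔ : ∀ x : V, (G.neighborSet x).ncard ≤ Δ)
    (v₀ : V) (i : ℕ) (hi : 2 ≤ i)
    (u v w : V) (hu : G.dist v₀ u = i)
    (huv : G.Adj u v) (huw : G.Adj u w)
    (hv : G.dist v₀ v = i - 1) (hw : G.dist v₀ w = i - 1) :
    (G.induce {x | G.dist v₀ x ≤ i - 1}).dist ⟨v, le_of_eq hv⟩ ⟨w, le_of_eq hw⟩ ≤ Δ * k :=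
  stmt6_general G k Δ hch hΔ v₀ i hi u v w hu huv huw hv hw
end

section
/- Let G be a connected k-chordal graph of maximum degree Δ, let v₀ ∈ V(G) and L_j the distance layers from v₀. Suppose u, v ∈ L_i are adjacent, x ∈ N(u) ∩ L_{i−1} and y ∈ N(v) ∩ L_{i−1}. Then d_{G[L_{≤ i−1}]}(x, y) ≤ 2Δk. -/
namespace SimpleGraph

variable {V : Type*} {G : SimpleGraph V} {k : ℕ}

open Walk

theorem exists_walk_getVert_eq :
    ∀ (n : ℕ) (f : ℕ → V), (∀ j < n, G.Adj (f j) (f (j + 1))) →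
      ∃ w : G.Walk (f 0) (f n), w.length = n ∧ ∀ j ≤ n, w.getVert j = f j
  | 0, f, _ => ⟨.nil, rfl, fun j hj => by simp [Nat.le_zero.mp hj]⟩
  | n + 1, f, hadj => by
    obtain ⟨w, hlen, hw⟩ :=
      exists_walk_getVert_eq n (fun j => f (j + 1)) fun j hj => hadj (j + 1) (by omega)
    refine ⟨.cons (hadj 0 (by omega)) w, by simp [hlen], ?_⟩
    rintro (_ | j) hj
    · rfl
    · exact hw j (by omega)

theorem _root_.IsKChordal.le_of_chordless_cyclic_seq (hch : IsKChordal G k) {f : ℕ → V} {m : ℕ}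
    (hm : 3 ≤ m) (hclose : f m = f 0) (hinj : Set.InjOn f (Set.Iio m))
    (hadj : ∀ j < m, G.Adj (f j) (f (j + 1)))
    (hchord : ∀ j l, j + 1 < l → l < m → G.Adj (f j) (f l) → j = 0 ∧ l = m - 1) :
    m ≤ k := by
  obtain ⟨w, hlen, hw⟩ := exists_walk_getVert_eq m f hadj
  set c : G.Walk (f 0) (f 0) := w.copy rfl hclose
  have hc : ∀ j ≤ m, c.getVert j = f j := by simpa [c] using hw
  have hf : ∀ j ≤ m, ∃ j' < m, f j' = f j := fun j hj => by
    rcases hj.lt_or_eq with hj | rfl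
    exacts [⟨j, hj, rfl⟩, ⟨0, by omega, hclose.symm⟩]
  have hclen : c.length = m := by simp [c, hlen]
  have hcycle : c.IsCycle := by
    rw [isCycle_iff_isPath_tail_and_le_length, ← IsPath.getVert_injOn_iff, hclen]
    refine ⟨fun j hj l hl hjl => ?_, hm⟩
    simp only [Set.mem_ofPred_eq, length_tail, hclen, getVert_tail] at hj hl hjl
    rw [hc _ (by omega), hc _ (by omega)] at hjl
    rcases (by omega : j + 1 < m ∨ j + 1 = m) with hj' | hj' <;>
      rcases (by omega : l + 1 < m ∨ l + 1 = m) with hl' | hl'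
    · have := hinj hj' hl' hjl; omega
    · rw [hl', hclose] at hjl; have := hinj hj' (by omega : 0 < m) hjl; omega
    · rw [hj', hclose] at hjl; have := hinj (by omega : 0 < m) hl' hjl; omega
    · omega
  have hedge : ∀ j < m, s(f j, f (j + 1)) ∈ c.edges := fun j hj =>
    (mk_mem_edges_iff_exists c).mpr ⟨j, by rw [hclen]; exact hj, by rw [hc _ hj.le, hc _ hj]⟩
  have hchordless : ∀ j l, j < l → l < m → G.Adj (f j) (f l) → s(f j, f l) ∈ c.edges := by
    intro j l hjl hl hjl'
    rcases (by omega : l = j + 1 ∨ j + 1 < l) with rfl | hlt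
    · exact hedge j (by omega)
    · obtain ⟨rfl, rfl⟩ := hchord j l hlt hl hjl'
      have := hedge (m - 1) (by omega)
      rwa [Nat.sub_add_cancel (by omega), hclose, Sym2.eq_swap] at this
  have := hch _ c hcycle fun s hs t ht hst => by
    obtain ⟨j, rfl, hj⟩ := mem_support_iff_exists_getVert.mp hs
    obtain ⟨l, rfl, hl⟩ := mem_support_iff_exists_getVert.mp ht
    rw [hclen] at hj hl
    obtain ⟨j', hj', hj'f⟩ := hf j hj
    obtain ⟨l', hl', hl'f⟩ := hf l hl
    rw [hc j hj, hc l hl, ← hj'f, ← hl'f] at hst ⊢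
    rcases lt_trichotomy j' l' with h | rfl | h
    · exact hchordless j' l' h hl' hst
    · exact absurd rfl hst.ne
    · rw [Sym2.eq_swap]; exact hchordless l' j' h hj' hst.symm
  rwa [hclen] at this

/-- `g 0, g 1, …, g n` are the consecutive vertices of an induced path of `G`. -/
structure IsInducedPathSeq (G : SimpleGraph V) (g : ℕ → V) (n : ℕ) : Prop where
  injOn : Set.InjOn g (Set.Iic n)
  adj : ∀ j < n, G.Adj (g j) (g (j + 1))
  not_adj : ∀ j l, j + 1 < l → l ≤ n → ¬ G.Adj (g j) (g l)

namespace IsInducedPathSeq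

variable {g : ℕ → V} {n : ℕ}

theorem comp_add (hg : IsInducedPathSeq G g n) {a m : ℕ} (h : a + m ≤ n) :
    IsInducedPathSeq G (fun j => g (a + j)) m where
  injOn j hj l hl hjl := by
    have := hg.injOn (show a + j ≤ n by have := Set.mem_Iic.mp hj; omega)
      (show a + l ≤ n by have := Set.mem_Iic.mp hl; omega) hjl
    omega
  adj j hj := hg.adj (a + j) (by omega)
  not_adj j l hjl hl := hg.not_adj (a + j) (a + l) (by omega) (by omega)

theorem map {W : Type*} {H : SimpleGraph W} (e : G ↪g H) (hg : IsInducedPathSeq G g n) :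
    IsInducedPathSeq H (e ∘ g) n where
  injOn := e.injective.comp_injOn hg.injOn
  adj j hj := e.map_adj_iff.mpr (hg.adj j hj)
  not_adj j l hjl hl := e.map_adj_iff.not.mpr (hg.not_adj j l hjl hl)

theorem snoc (hg : IsInducedPathSeq G g n) {z : V} (hz : ∀ j ≤ n, g j ≠ z) (hadj : G.Adj (g n) z)
    (hnadj : ∀ j < n, ¬ G.Adj (g j) z) :
    IsInducedPathSeq G (fun j => if j ≤ n then g j else z) (n + 1) where
  injOn j hj l hl hjl := by
    simp only [Set.mem_Iic] at hj hl
    dsimp only at hjl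
    split_ifs at hjl with h1 h2 h2
    · exact hg.injOn h1 h2 hjl
    · exact absurd hjl (hz j h1)
    · exact absurd hjl.symm (hz l h2)
    · omega
  adj j hj := by
    rcases (by omega : j < n ∨ j = n) with hj | rfl
    · simpa [hj.le, Nat.succ_le_of_lt hj] using hg.adj j hj
    · simpa using hadj
  not_adj j l hjl hl := by
    rcases (by omega : l ≤ n ∨ l = n + 1) with hl | rfl
    · simpa [hl, (by omega : j ≤ n)] using hg.not_adj j l hjl hl
    · simpa [(by omega : j ≤ n)] using hnadj j (by omega)

end IsInducedPathSeq

variable {g : ℕ → V} {n : ℕ}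

theorem _root_.IsKChordal.add_two_le_of_apex (hch : IsKChordal G k)
    (hg : IsInducedPathSeq G g n) (hn : 1 ≤ n) {z : V} (hz : ∀ j ≤ n, g j ≠ z)
    (h0 : G.Adj z (g 0)) (hn' : G.Adj z (g n)) (hint : ∀ j, 0 < j → j < n → ¬ G.Adj z (g j)) :
    n + 2 ≤ k := by
  let f : ℕ → V := fun j => if j ≤ n then g j else if j = n + 1 then z else g 0
  have hf : ∀ j ≤ n, f j = g j := fun j hj => if_pos hj
  have hf_apex : f (n + 1) = z := by simp [f]
  refine hch.le_of_chordless_cyclic_seq (f := f) (m := n + 2) (by omega) (by simp [f]) ?_ ?_ ?_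
  · intro j hj l hl hjl
    simp only [Set.mem_Iio] at hj hl
    rcases (by omega : j ≤ n ∨ j = n + 1) with hj | rfl <;>
      rcases (by omega : l ≤ n ∨ l = n + 1) with hl | rfl
    · exact hg.injOn hj hl (by rwa [hf j hj, hf l hl] at hjl)
    · exact absurd (by rwa [hf j hj, hf_apex] at hjl) (hz j hj)
    · exact absurd (by rwa [hf l hl, hf_apex] at hjl) (hz l hl).symm
    · rfl
  · intro j hj
    rcases (by omega : j < n ∨ j = n ∨ j = n + 1) with hj | rfl | rfl
    · rw [hf j hj.le, hf (j + 1) hj]; exact hg.adj j hj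
    · rw [hf j le_rfl, hf_apex]; exact hn'.symm
    · simpa [f] using h0
  · intro j l hjl hl hadj
    rw [hf j (by omega)] at hadj
    rcases (by omega : l ≤ n ∨ l = n + 1) with hl | rfl
    · rw [hf l hl] at hadj
      exact absurd hadj (hg.not_adj j l hjl hl)
    · rw [hf_apex] at hadj
      refine ⟨?_, rfl⟩
      by_contra hj
      exact hint j (by omega) (by omega) hadj.symm

theorem _root_.IsKChordal.add_two_le_of_adj_apexes (hch : IsKChordal G k) {u v : V}
    (huv : G.Adj u v) (hg : IsInducedPathSeq G g n) (hn : 1 ≤ n)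
    (hu : ∀ j ≤ n, g j ≠ u) (hv : ∀ j ≤ n, g j ≠ v)
    (h0 : G.Adj u (g 0) ∨ G.Adj v (g 0)) (hn' : G.Adj u (g n) ∨ G.Adj v (g n))
    (hint : ∀ j, 0 < j → j < n → ¬ G.Adj u (g j) ∧ ¬ G.Adj v (g j)) :
    n + 2 ≤ k := by
  wlog h0u : G.Adj u (g 0) generalizing u v
  · exact this huv.symm hv hu h0.symm hn'.symm (fun j h1 h2 => (hint j h1 h2).symm)
      (h0.resolve_left h0u)
  by_cases hnu : G.Adj u (g n)
  · exact hch.add_two_le_of_apex hg hn hu h0u hnu fun j h1 h2 => (hint j h1 h2).1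
  have hnv := hn'.resolve_left hnu
  by_cases h0v : G.Adj v (g 0)
  · exact hch.add_two_le_of_apex hg hn hv h0v hnv fun j h1 h2 => (hint j h1 h2).2
  -- the induced cycle `u, g 0, …, g n, v`
  have hg' := hg.snoc hv hnv.symm fun j hj hadj => by
    rcases Nat.eq_zero_or_pos j with rfl | hj0
    exacts [h0v hadj.symm, (hint j hj0 hj).2 hadj.symm]
  have := hch.add_two_le_of_apex hg' (by omega) (z := u)
    (fun j hj => by
      split_ifs with h
      exacts [hu j h, huv.ne.symm])
    (by simpa using h0u) (by simpa using huv)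
    (fun j hj0 hj => by
      rcases (by omega : j < n ∨ j = n) with hj | rfl
      · simpa [hj.le] using (hint j hj0 hj).1
      · simpa using hnu)
  omega

theorem _root_.IsKChordal.le_add_of_isInducedPathSeq (hch : IsKChordal G k) {u v : V}
    (huv : G.Adj u v) (hg : IsInducedPathSeq G g n) (hu : ∀ j ≤ n, g j ≠ u)
    (hv : ∀ j ≤ n, g j ≠ v) {a b : ℕ} (hab : a < b) (hbn : b ≤ n)
    (ha : g a ∈ G.neighborSet u ∪ G.neighborSet v) (hb : g b ∈ G.neighborSet u ∪ G.neighborSet v)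
    (hbetween : ∀ c, a < c → c < b → g c ∉ G.neighborSet u ∪ G.neighborSet v) :
    b ≤ a + k := by
  have := hch.add_two_le_of_adj_apexes huv (hg.comp_add (a := a) (m := b - a) (by omega))
    (by omega) (fun j _ => hu _ (by omega)) (fun j _ => hv _ (by omega)) (by simpa using ha)
    (by rwa [Nat.add_sub_cancel' hab.le]) fun j hj0 hj => by
      simpa [not_or] using hbetween (a + j) (by omega) (by omega)
  omega

theorem isInducedPathSeq_getVert_of_length_eq_dist {a b : V} {p : G.Walk a b}
    (hp : p.length = G.dist a b) : IsInducedPathSeq G p.getVert p.length where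
  injOn := (p.isPath_of_length_eq_dist hp).getVert_injOn
  adj j hj := p.adj_getVert_succ hj
  not_adj j l hjl hl hadj := by
    have := dist_le ((p.take j).append (.cons hadj (p.drop l)))
    simp only [length_append, length_cons, take_length, drop_length] at this
    omega

theorem Connected.preconnected_induce_dist_le (hG : G.Connected) (v₀ : V) (r : ℕ) :
    (G.induce {z | G.dist v₀ z ≤ r}).Preconnected := by
  have hv₀ : G.dist v₀ v₀ ≤ r := by simp
  suffices h : ∀ z, (G.induce {z | G.dist v₀ z ≤ r}).Reachable ⟨v₀, hv₀⟩ z from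
    fun a b => (h a).symm.trans (h b)
  rintro ⟨z, hz⟩
  obtain ⟨w, hw⟩ := hG.exists_walk_length_eq_dist v₀ z
  have hsupp : ∀ x ∈ w.support, G.dist v₀ x ≤ r := by
    intro x hx
    obtain ⟨j, rfl, hj⟩ := mem_support_iff_exists_getVert.mp hx
    calc G.dist v₀ (w.getVert j) ≤ (w.take j).length := dist_le _
      _ ≤ r := by rw [take_length]; exact (min_le_right _ _).trans (hw ▸ hz)
  exact (w.induce _ hsupp).reachable

end SimpleGraph

open Finset in
theorem Finset.card_filter_range_le_ncard {α : Type*} [Finite α] {g : ℕ → α} {n : ℕ}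
    (hg : Set.InjOn g (Set.Iic n)) (s : Set α) [DecidablePred (· ∈ s)] :
    #{j ∈ range (n + 1) | g j ∈ s} ≤ s.ncard := by
  rw [← Set.ncard_coe_finset]
  exact Set.ncard_le_ncard_of_injOn g (fun _ hj => (mem_filter.mp hj).2)
    (hg.mono fun _ hj => Nat.lt_succ_iff.mp (mem_range.mp (mem_filter.mp hj).1))

open Finset in
theorem Finset.le_card_sub_one_mul_of_gaps_le (M : Finset ℕ) {k D : ℕ} (h0 : 0 ∈ M) (hD : D ∈ M)
    (hgap : ∀ a ∈ M, ∀ b ∈ M, a < b → (∀ c ∈ M, c ≤ a ∨ b ≤ c) → b ≤ a + k) :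
    D ≤ (#M - 1) * k := by
  have key : ∀ N, ∀ a ∈ M, #{c ∈ M | a < c} = N → D - a ≤ N * k := by
    intro N
    induction N using Nat.strong_induction_on with
    | _ N ih =>
      intro a ha hN
      by_cases haD : D ≤ a
      · omega
      have hne : ({c ∈ M | a < c}).Nonempty := ⟨D, by simp [hD]; omega⟩
      set b := ({c ∈ M | a < c}).min' hne
      have hb : b ∈ M ∧ a < b := mem_filter.mp (min'_mem _ hne)
      have hmin : ∀ c ∈ M, c ≤ a ∨ b ≤ c := fun c hc => by
        by_cases hac : a < c
        · exact .inr (min'_le _ _ (by simp [hc, hac]))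
        · exact .inl (by omega)
      have hsub : ({c ∈ M | b < c}) ⊂ {c ∈ M | a < c} :=
        ssubset_iff_of_subset (monotone_filter_right M fun _ _ h => hb.2.trans h) |>.mpr
          ⟨b, by simp [hb], by simp⟩
      have hcard := hN ▸ card_lt_card hsub
      have hrest := ih _ hcard b hb.1 rfl
      have hab := hgap a ha b hb.1 hb.2 hmin
      calc D - a ≤ k + (D - b) := by omega
        _ ≤ k + #{c ∈ M | b < c} * k := by omega
        _ = (#{c ∈ M | b < c} + 1) * k := by ring
        _ ≤ N * k := Nat.mul_le_mul_right k hcard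
  have hpos : #{c ∈ M | 0 < c} < #M := card_lt_card (filter_ssubset.mpr ⟨0, h0, lt_irrefl 0⟩)
  calc D = D - 0 := rfl
    _ ≤ #{c ∈ M | 0 < c} * k := key _ 0 h0 rfl
    _ ≤ (#M - 1) * k := Nat.mul_le_mul_right k (by omega)

open SimpleGraph Finset in
/-- In a connected `k`-chordal graph of maximum degree `Δ`, if `u, v ∈ L_i` are adjacent,
`x ∈ N(u) ∩ L_{i-1}` and `y ∈ N(v) ∩ L_{i-1}`, then `d_{G[L_{≤ i-1}]}(x, y) ≤ 2Δk`. -/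
theorem stmt7 {V : Type*} [Fintype V] (G : SimpleGraph V) (hG : G.Connected)
    (k Δ : ℕ) (hch : IsKChordal G k) (hΔ : ∀ z : V, (G.neighborSet z).ncard ≤ Δ)
    (v₀ : V) (i : ℕ) (hi : 1 ≤ i)
    (u v x y : V) (hu : G.dist v₀ u = i) (hv : G.dist v₀ v = i) (huv : G.Adj u v)
    (hux : G.Adj u x) (hvy : G.Adj v y)
    (hx : G.dist v₀ x = i - 1) (hy : G.dist v₀ y = i - 1) :
    (G.induce {z | G.dist v₀ z ≤ i - 1}).dist ⟨x, le_of_eq hx⟩ ⟨y, le_of_eq hy⟩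
      ≤ 2 * Δ * k := by
  classical
  set S : Set V := {z | G.dist v₀ z ≤ i - 1}
  obtain ⟨p, hp⟩ := (hG.preconnected_induce_dist_le v₀ (i - 1)
    ⟨x, le_of_eq hx⟩ ⟨y, le_of_eq hy⟩).exists_walk_length_eq_dist
  set g : ℕ → V := fun j => (p.getVert j : V)
  have hg : IsInducedPathSeq G g p.length :=
    (isInducedPathSeq_getVert_of_length_eq_dist hp).map (Embedding.induce S)
  have hgS : ∀ j, G.dist v₀ (g j) ≤ i - 1 := fun j => (p.getVert j).2
  have hgu : ∀ j, g j ≠ u := fun j h => by have := hgS j; rw [h, hu] at this; omega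
  have hgv : ∀ j, g j ≠ v := fun j h => by have := hgS j; rw [h, hv] at this; omega
  set N := G.neighborSet u ∪ G.neighborSet v
  set M : Finset ℕ := {j ∈ range (p.length + 1) | g j ∈ N}
  have hM : #M ≤ 2 * Δ := (card_filter_range_le_ncard hg.injOn N).trans <| by
    linarith [Set.ncard_union_le (G.neighborSet u) (G.neighborSet v), hΔ u, hΔ v]
  have hgap : ∀ a ∈ M, ∀ b ∈ M, a < b → (∀ c ∈ M, c ≤ a ∨ b ≤ c) → b ≤ a + k := by
    intro a ha b hb hab hmin
    simp only [M, mem_filter, mem_range] at ha hb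
    refine hch.le_add_of_isInducedPathSeq huv hg (fun j _ => hgu j) (fun j _ => hgv j) hab
      (by omega) ha.2 hb.2 fun c hac hcb hc => ?_
    have := hmin c (by simp only [M, mem_filter, mem_range]; exact ⟨by omega, hc⟩)
    omega
  calc _ = p.length := hp.symm
    _ ≤ (#M - 1) * k :=
      M.le_card_sub_one_mul_of_gaps_le (by simp [M, N, g, hux]) (by simp [M, N, g, hvy]) hgap
    _ ≤ 2 * Δ * k := Nat.mul_le_mul_right k (by omega)
end
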